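/- arXiv:1701.04856 — 2 statements merged into one kernel-verified Lean document; each statement's English description precedes it below -/
import Mathlib

section
/- Let 𝔤, σ, τ, ω, ⟨·,·⟩ be as in the dihedral setup (σ^T = id, τ anti-linear involutive automorphism, ⟨·,·⟩ non-degenerate invariant, σ-invariant, and τ-conjugate-invariant). For k, p ∈ ℤ/T define the real subspace 𝔤_{k,p} = {x ∈ 𝔤 : σ^k τ x = ω^{kp} x}, the fixed set of the anti-linear involution ω^{−kp} σ^k ∘ τ. Then the restriction of ⟨·,·⟩ to 𝔤_{k,−p} × 𝔤_{k,p} is real-valued and non-degenerate on both sides. In particular, ⟨·,·⟩ restricts to a non-degenerate invariant symmetric real bilinear form on the real form 𝔤_k = 𝔤_{k,0}. -/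
/-!
Since `σ ^ T = 1` and `X ^ T - 1` is squarefree, `σ` is diagonalisable with eigenvalues of modulus
one; as `τ` preserves its eigenspaces and is antilinear, `σ ∘ τ ∘ σ = τ`. Hence `θ = σ^k ∘ τ` is an
antilinear involution with `B (θ x) (θ y) = conj (B x y)`, and `𝔤_{k,p}` is the `ω^{kp}`-eigenset
of `θ`. For `θ x = conj c • x`, `θ y = c • y` and `‖c‖ = 1` this gives
`conj (B x y) = conj c * c * B x y = B x y`. For nondegeneracy, if `B x₁ y = 1` then
`x₁ + c • θ x₁` lies in the `conj c`-eigenset of `θ` and pairs with `y` to `2`.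
-/

section

open Polynomial Module.End ComplexConjugate

theorem Function.iterate_apply_apply_iterate_eq {α : Type*} {f t : α → α}
    (h : ∀ x, f (t (f x)) = t x) (k : ℕ) (x : α) : f^[k] (t (f^[k] x)) = t x := by
  induction k generalizing x with
  | zero => rfl
  | succ k ih => rw [Function.iterate_succ_apply', Function.iterate_succ_apply, ih, h]

theorem Function.iterate_map_map_eq {α β : Type*} {F : α → α → β} {f : α → α}
    (h : ∀ x y, F (f x) (f y) = F x y) (k : ℕ) (x y : α) : F (f^[k] x) (f^[k] y) = F x y := by
  induction k generalizing x y with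
  | zero => rfl
  | succ k ih => rw [Function.iterate_succ_apply, Function.iterate_succ_apply, ih, h]

theorem Complex.conj_zpow_of_norm_eq_one {ω : ℂ} (hω : ‖ω‖ = 1) (n : ℤ) :
    conj (ω ^ n) = ω ^ (-n) := by
  rw [map_zpow₀, ← Complex.inv_eq_conj hω, inv_zpow, zpow_neg]

theorem Module.End.HasEigenvector.pow_eq_one {K W : Type*} [Field K] [AddCommGroup W]
    [Module K W] {f : Module.End K W} {T : ℕ} (hf : f ^ T = 1) {μ : K} {v : W}
    (hv : f.HasEigenvector μ v) : μ ^ T = 1 := by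
  have h := hv.pow_apply T
  rw [hf, Module.End.one_apply, eq_comm, ← one_smul K v, smul_smul, mul_one] at h
  exact smul_left_injective K hv.2 h

variable {V : Type*} [AddCommGroup V] [Module ℂ V]

theorem Module.End.apply_apply_apply_eq_of_mapsTo_eigenspace [FiniteDimensional ℂ V]
    {f : Module.End ℂ V} {T : ℕ} (hT : T ≠ 0) (hf : f ^ T = 1) (t : V →ₗ⋆[ℂ] V)
    (ht : ∀ μ : ℂ, μ ^ T = 1 → ∀ v, f v = μ • v → f (t v) = μ • t v) (x : V) :
    f (t (f x)) = t x := by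
  have hss : f.IsSemisimple := isSemisimple_of_squarefree_aeval_eq_zero
    (separable_X_pow_sub_C (1 : ℂ) (by exact_mod_cast hT) one_ne_zero).squarefree (by simp [hf])
  have hx : x ∈ ⨆ μ, f.eigenspace μ := hss.iSup_eigenspace_eq_top ▸ Submodule.mem_top
  induction hx using Submodule.iSup_induction' with
  | mem μ v hv =>
    rcases eq_or_ne v 0 with rfl | hv0
    · simp
    have hμ : μ ^ T = 1 := HasEigenvector.pow_eq_one hf ⟨hv, hv0⟩
    rw [mem_eigenspace_iff.mp hv, map_smulₛₗ, map_smul, ht μ hμ v (mem_eigenspace_iff.mp hv),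
      smul_smul, ← Complex.inv_eq_conj (Complex.norm_eq_one_of_pow_eq_one hμ hT),
      inv_mul_cancel₀ (by rintro rfl; simp [hT] at hμ), one_smul]
  | zero => simp
  | add x y _ _ hx hy => simp only [map_add, hx, hy]

section Antilinear

variable {θ : V →ₗ⋆[ℂ] V} {B : V →ₗ[ℂ] V →ₗ[ℂ] ℂ}

theorem conj_apply_apply_eq_of_apply_eq_smul (hB : ∀ x y, B (θ x) (θ y) = conj (B x y))
    {c : ℂ} (hc : ‖c‖ = 1) {x y : V} (hx : θ x = conj c • x) (hy : θ y = c • y) :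
    conj (B x y) = B x y := by
  rw [← hB, hx, hy, map_smul, map_smul, LinearMap.smul_apply, smul_eq_mul, smul_eq_mul,
    ← mul_assoc, Complex.mul_conj', hc]
  simp

theorem exists_apply_eq_conj_smul_and_apply_apply_ne_zero (hθ : ∀ x, θ (θ x) = x)
    (hB : ∀ x y, B (θ x) (θ y) = conj (B x y)) {c : ℂ} (hc : ‖c‖ = 1) {x₀ y : V}
    (hy : θ y = c • y) (hx₀ : B x₀ y ≠ 0) : ∃ x, θ x = conj c • x ∧ B x y ≠ 0 := by
  have hcc : conj c * c = 1 := by simp [Complex.conj_mul', hc]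
  obtain ⟨x₁, hx₁⟩ : ∃ x₁, B x₁ y = 1 := ⟨(B x₀ y)⁻¹ • x₀, by simp [hx₀]⟩
  refine ⟨x₁ + c • θ x₁, ?_, ?_⟩
  · rw [map_add, map_smulₛₗ, hθ, smul_add, smul_smul, hcc, one_smul, add_comm]
  · have hy' : y = conj c • θ y := by rw [hy, smul_smul, hcc, one_smul]
    have hθx₁ : B (θ x₁) y = conj c := by
      rw [hy', map_smul, hB, hx₁, map_one, smul_eq_mul, mul_one]
    rw [map_add, LinearMap.add_apply, map_smul, LinearMap.smul_apply, hθx₁, hx₁, smul_eq_mul,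
      mul_comm, hcc]
    norm_num

theorem pairing_eigensets_real_and_nondegenerate (hθ : ∀ x, θ (θ x) = x)
    (hB : ∀ x y, B (θ x) (θ y) = conj (B x y)) (hBsymm : ∀ x y, B x y = B y x)
    (hBnd : ∀ x, (∀ y, B x y = 0) → x = 0) {c : ℂ} (hc : ‖c‖ = 1) :
    (∀ x y, θ x = conj c • x → θ y = c • y → ∃ r : ℝ, B x y = r) ∧
      (∀ y, θ y = c • y → y ≠ 0 → ∃ x, θ x = conj c • x ∧ B x y ≠ 0) ∧
      (∀ x, θ x = conj c • x → x ≠ 0 → ∃ y, θ y = c • y ∧ B x y ≠ 0) := by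
  have hpair : ∀ y ≠ 0, ∃ x₀, B x₀ y ≠ 0 := fun y hy => by
    by_contra! h
    exact hy (hBnd y fun x => (hBsymm y x).trans (h x))
  refine ⟨fun x y hx hy => ⟨_, (Complex.conj_eq_iff_re.mp
      (conj_apply_apply_eq_of_apply_eq_smul hB hc hx hy)).symm⟩, fun y hy hy0 => ?_,
    fun x hx hx0 => ?_⟩
  · obtain ⟨x₀, hx₀⟩ := hpair y hy0
    exact exists_apply_eq_conj_smul_and_apply_apply_ne_zero hθ hB hc hy hx₀
  · obtain ⟨y₀, hy₀⟩ := hpair x hx0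
    obtain ⟨y, hy, hxy⟩ := exists_apply_eq_conj_smul_and_apply_apply_ne_zero hθ hB
      (by rwa [Complex.norm_conj]) hx hy₀
    exact ⟨y, by rwa [Complex.conj_conj] at hy, by rwa [hBsymm]⟩

end Antilinear

end

theorem stmt_7_general {g : Type*} [LieRing g] [LieAlgebra ℂ g] [FiniteDimensional ℂ g]
    (T : ℕ) (hT : 1 ≤ T) (ω : ℂ) (hω : IsPrimitiveRoot ω T)
    (σ : g ≃ₗ⁅ℂ⁆ g) (hσT : ∀ x : g, (⇑σ)^[T] x = x)
    (τ : g → g)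
    (hτadd : ∀ x y, τ (x + y) = τ x + τ y)
    (hτsmul : ∀ (z : ℂ) (x : g), τ (z • x) = (starRingEnd ℂ) z • τ x)
    (hτinv : ∀ x, τ (τ x) = x)
    (hτσ : ∀ (j : ℤ) (x : g), σ x = ω ^ j • x → σ (τ x) = ω ^ j • τ x)
    (B : g →ₗ[ℂ] g →ₗ[ℂ] ℂ)
    (hBsymm : ∀ x y, B x y = B y x)
    (hBnd : ∀ x, (∀ y, B x y = 0) → x = 0)
    (hBσ : ∀ x y, B (σ x) (σ y) = B x y)
    (hBτ : ∀ x y, B (τ x) (τ y) = (starRingEnd ℂ) (B x y)) :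
    ∀ (k : ℕ) (p : ℤ),
      (∀ x y : g,
        (⇑σ)^[k] (τ x) = ω ^ (-((k : ℤ) * p)) • x →
        (⇑σ)^[k] (τ y) = ω ^ ((k : ℤ) * p) • y →
        ∃ r : ℝ, B x y = (r : ℂ)) ∧
      (∀ y : g, (⇑σ)^[k] (τ y) = ω ^ ((k : ℤ) * p) • y → y ≠ 0 →
        ∃ x : g, (⇑σ)^[k] (τ x) = ω ^ (-((k : ℤ) * p)) • x ∧ B x y ≠ 0) ∧
      (∀ x : g, (⇑σ)^[k] (τ x) = ω ^ (-((k : ℤ) * p)) • x → x ≠ 0 →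
        ∃ y : g, (⇑σ)^[k] (τ y) = ω ^ ((k : ℤ) * p) • y ∧ B x y ≠ 0) := by
  intro k p
  have hT0 : T ≠ 0 := by omega
  have : NeZero T := ⟨hT0⟩
  let f : Module.End ℂ g := σ.toLinearEquiv.toLinearMap
  let t : g →ₗ⋆[ℂ] g := { toFun := τ, map_add' := hτadd, map_smul' := hτsmul }
  have hστσ : ∀ x, σ (τ (σ x)) = τ x := by
    refine Module.End.apply_apply_apply_eq_of_mapsTo_eigenspace hT0
      (LinearMap.ext fun x => (Module.End.pow_apply f T x).trans (hσT x)) t ?_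
    rintro μ hμ v hv
    obtain ⟨i, -, rfl⟩ := hω.eq_pow_of_pow_eq_one hμ
    exact_mod_cast hτσ i v (by exact_mod_cast hv)
  let θ : g →ₗ⋆[ℂ] g := (f ^ k).comp t
  have hθ : ∀ x, θ x = (⇑σ)^[k] (τ x) := fun x => Module.End.pow_apply f k (t x)
  have hθθ : ∀ x, θ (θ x) = x := fun x => by
    rw [hθ, hθ]
    exact (Function.iterate_apply_apply_iterate_eq hστσ k (τ x)).trans (hτinv x)
  have hBθ : ∀ x y, B (θ x) (θ y) = starRingEnd ℂ (B x y) := fun x y => by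
    rw [hθ, hθ]
    exact (Function.iterate_map_map_eq (F := fun x y => B x y) hBσ k _ _).trans (hBτ x y)
  have hω1 : ‖ω‖ = 1 := hω.norm'_eq_one hT0
  have hc : ‖ω ^ ((k : ℤ) * p)‖ = 1 := by rw [norm_zpow, hω1, one_zpow]
  simpa only [← hθ, ← Complex.conj_zpow_of_norm_eq_one hω1] using
    pairing_eigensets_real_and_nondegenerate hθθ hBθ hBsymm hBnd hc

/-- Lemma 2.1, second part: in the dihedral setup, for `k, p ∈ ℤ/T` let
`g_{k,p} = {x | σ^k τ x = ω^{kp} x}` be the fixed set of the anti-linear involution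
`ω^{−kp} σ^k ∘ τ`.  Then the restriction of the form to `g_{k,−p} × g_{k,p}` is real-valued
and non-degenerate on both sides; in particular (`p = 0`) it restricts to a non-degenerate
invariant symmetric real bilinear form on the real form `g_k = g_{k,0}`. -/
theorem stmt_7 {g : Type*} [LieRing g] [LieAlgebra ℂ g] [FiniteDimensional ℂ g]
    (T : ℕ) (hT : 1 ≤ T) (ω : ℂ) (hω : IsPrimitiveRoot ω T)
    (σ : g ≃ₗ⁅ℂ⁆ g) (hσT : ∀ x : g, (⇑σ)^[T] x = x)
    (τ : g → g)
    (hτadd : ∀ x y, τ (x + y) = τ x + τ y)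
    (hτsmul : ∀ (z : ℂ) (x : g), τ (z • x) = (starRingEnd ℂ) z • τ x)
    (hτlie : ∀ x y : g, τ ⁅x, y⁆ = ⁅τ x, τ y⁆)
    (hτinv : ∀ x, τ (τ x) = x)
    (hτσ : ∀ (j : ℤ) (x : g), σ x = ω ^ j • x → σ (τ x) = ω ^ j • τ x)
    (B : g →ₗ[ℂ] g →ₗ[ℂ] ℂ)
    (hBsymm : ∀ x y, B x y = B y x)
    (hBnd : ∀ x, (∀ y, B x y = 0) → x = 0)
    (hBinv : ∀ x y z : g, B ⁅x, y⁆ z = - B y ⁅x, z⁆)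
    (hBσ : ∀ x y, B (σ x) (σ y) = B x y)
    (hBτ : ∀ x y, B (τ x) (τ y) = (starRingEnd ℂ) (B x y)) :
    ∀ (k : ℕ) (p : ℤ),
      (∀ x y : g,
        (⇑σ)^[k] (τ x) = ω ^ (-((k : ℤ) * p)) • x →
        (⇑σ)^[k] (τ y) = ω ^ ((k : ℤ) * p) • y →
        ∃ r : ℝ, B x y = (r : ℂ)) ∧
      (∀ y : g, (⇑σ)^[k] (τ y) = ω ^ ((k : ℤ) * p) • y → y ≠ 0 →
        ∃ x : g, (⇑σ)^[k] (τ x) = ω ^ (-((k : ℤ) * p)) • x ∧ B x y ≠ 0) ∧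
      (∀ x : g, (⇑σ)^[k] (τ x) = ω ^ (-((k : ℤ) * p)) • x → x ≠ 0 →
        ∃ y : g, (⇑σ)^[k] (τ y) = ω ^ ((k : ℤ) * p) • y ∧ B x y ≠ 0) :=
  stmt_7_general T hT ω hω σ hσT τ hτadd hτsmul hτinv hτσ B hBsymm hBnd hBσ hBτ
end

section
/- Let 𝔥 be a finite-dimensional complex vector space with a symmetric non-degenerate bilinear form ⟨·,·⟩, dual bases {H_i} and {H^i} of 𝔥 (⟨H^i, H_j⟩ = δ^i_j), and functionals α_0,…,α_ℓ ∈ 𝔥*. Consider the Heisenberg-type Lie algebra ℋ with basis {H^{i(+)}_n, H^{i(−)}_n : 1 ≤ i ≤ ℓ, n ∈ ℤ} ∪ {E^{j(+)}_n : 0 ≤ j ≤ ℓ, n ∈ ℤ} ∪ {𝟙}, with non-trivial brackets [H^{i(+)}_m, H^{j(−)}_n] = δ_{m+n,0} ⟨H^i, H^j⟩ 𝟙 and [H^{i(+)}_m, E^{j(+)}_n] = α_j(H^i) E^{j(+)}_{m+n}, and 𝟙 central. In the Poisson algebra S(ℋ) (suitably completed), the elements Ê^{j(+)}_n := Σ_{p∈ℤ}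 p E^{j(+)}_{n−p} H^{(−)}_{j,p} − n E^{j(+)}_n (for all n ∈ ℤ, 0 ≤ j ≤ ℓ, where H^{(−)}_{j,p} = Σ_k α_j(H_k) H^{k(−)}_p) together with 𝟙 − 1 generate a Poisson ideal. Concretely: {H^{i(+)}_m, Ê^{j(+)}_n} = α_j(H^i) Ê^{j(+)}_{m+n} − α_j(H^i) m E^{j(+)}_{m+n}(𝟙 − 1), and Ê^{j(+)}_n Poisson-commutes with all H^{i(−)}_m and E^{i(+)}_m. -/
/-!
The bracket with `H^{i(+)}_m` is a derivation shifting every mode `E^{j(+)}_n` by `m` with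
factor `α_j(H^i)`, and it pairs `H^{(−)}_{j,p}` with `α_j(H^i) 𝟙` exactly when `p = −m` (expand
`H^i` in the dual basis). Applied term by term to `Ê^{j(+)}_n`, the shift produces
`α_j(H^i) Ê^{j(+)}_{m+n}` up to the linear term, which is off by `α_j(H^i) m E^{j(+)}_{m+n}`;
the single term `p = −m` contributes `−α_j(H^i) m E^{j(+)}_{m+n} 𝟙`, and the two combine to the
multiple of `𝟙 − 1`. The brackets with `H^{(−)}` and `E^{(+)}` vanish term by term.
-/

theorem Module.Basis.sum_apply_mul_pairing_of_dual {R ι H : Type*} [CommSemiring R] [Fintype ι]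
    [DecidableEq ι] [AddCommMonoid H] [Module R H] (B : H →ₗ[R] H →ₗ[R] R)
    (b : Module.Basis ι R H) (bDual : ι → H)
    (hdual : ∀ k l : ι, B (bDual k) (b l) = if k = l then 1 else 0) (f : H →ₗ[R] R) (x : H) :
    ∑ k : ι, f (b k) * B (bDual k) x = f x := by
  have hrepr : ∀ k, B (bDual k) x = b.repr x k := fun k => by
    conv_lhs => rw [← b.sum_repr x, map_sum]
    simp [hdual]
  conv_rhs => rw [← b.sum_repr x, map_sum]
  simp [hrepr, mul_comm]

section PoissonBracket

variable {P : Type*} [CommRing P] [Algebra ℂ P] (br : P →ₗ[ℂ] P →ₗ[ℂ] P)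

theorem br_one_right_of_leibniz (hleib : ∀ x y z : P, br x (y * z) = br x y * z + y * br x z)
    (x : P) : br x 1 = 0 := by
  simpa using hleib x 1 1

variable [TopologicalSpace P]

/-- `Ê^{j(+)}_n` of the paper is `hatMode E^{j(+)} H^{(−)}_{j,·} n`. -/
noncomputable def hatMode (e h : ℤ → P) (n : ℤ) : P :=
  ∑' p : ℤ, (p : ℂ) • (e (n - p) * h p) - (n : ℂ) • e n

variable {br}

theorem br_hatMode_eq_zero (hleib : ∀ x y z : P, br x (y * z) = br x y * z + y * br x z)
    {x : P} (hx : ∀ f : ℤ → P, Summable f → br x (∑' p, f p) = ∑' p, br x (f p))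
    {e h : ℤ → P} (he : ∀ n, br x (e n) = 0) (hh : ∀ p, br x (h p) = 0) {n : ℤ}
    (hs : Summable fun p : ℤ => (p : ℂ) • (e (n - p) * h p)) :
    br x (hatMode e h n) = 0 := by
  simp [hatMode, hx _ hs, hleib, he, hh]

theorem br_hatMode_of_shift [T2Space P] [IsTopologicalRing P] [ContinuousConstSMul ℂ P]
    (hleib : ∀ x y z : P, br x (y * z) = br x y * z + y * br x z)
    {x : P} (hx : ∀ f : ℤ → P, Summable f → br x (∑' p, f p) = ∑' p, br x (f p))
    {e h : ℤ → P} {a : ℂ} {m : ℤ} {one : P}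
    (he : ∀ n, br x (e n) = a • e (m + n))
    (hh : ∀ p, br x (h p) = if m + p = 0 then a • one else 0) {n : ℤ}
    (hs : Summable fun p : ℤ => (p : ℂ) • (e (n - p) * h p))
    (hs' : Summable fun p : ℤ => (p : ℂ) • (e (m + n - p) * h p)) :
    br x (hatMode e h n) = a • hatMode e h (m + n) - a • ((m : ℂ) • (e (m + n) * (one - 1))) := by
  have hterm : ∀ p : ℤ, br x ((p : ℂ) • (e (n - p) * h p)) =
      a • ((p : ℂ) • (e (m + n - p) * h p)) +
        if p = -m then (-(m : ℂ)) • a • (e (m + n) * one) else 0 := by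
    intro p
    rw [map_smul, hleib, he, hh, show m + (n - p) = m + n - p by ring]
    by_cases hp : p = -m
    · subst hp
      simp [show n - -m = m + n by ring, smul_smul, mul_comm]
    · simp [hp, show ¬ m + p = 0 by omega, smul_smul, mul_comm]
  have hsingle : Summable fun p : ℤ => if p = -m then (-(m : ℂ)) • a • (e (m + n) * one) else 0 :=
    summable_of_ne_finset_zero (s := {-m}) fun p hp => by simp_all
  rw [hatMode, map_sub, hx _ hs, tsum_congr hterm, (hs'.const_smul a).tsum_add hsingle,
    hs'.tsum_const_smul a, tsum_ite_eq, map_smul, he, hatMode]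
  simp only [Algebra.smul_def]
  push_cast
  ring

end PoissonBracket

theorem stmt_18_general {H : Type*} [AddCommGroup H] [Module ℂ H]
    {ι ιE : Type*} [Fintype ι]
    (B : H →ₗ[ℂ] H →ₗ[ℂ] ℂ) (hBsymm : ∀ x y, B x y = B y x)
    (bH : Module.Basis ι ℂ H) (Hup : ι → H) [DecidableEq ι]
    (hdual : ∀ a b : ι, B (Hup a) (bH b) = if a = b then 1 else 0)
    (α : ιE → (H →ₗ[ℂ] ℂ))
    {P : Type*} [CommRing P] [Algebra ℂ P]
    [TopologicalSpace P] [T2Space P] [IsTopologicalRing P] [ContinuousConstSMul ℂ P]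
    (br : P →ₗ[ℂ] P →ₗ[ℂ] P)
    (hskew : ∀ x y : P, br x y = - br y x)
    (hleib : ∀ x y z : P, br x (y * z) = br x y * z + y * br x z)
    (HP HM : ι → ℤ → P) (E : ιE → ℤ → P) (one : P)
    (hMM : ∀ (i i' : ι) (m n : ℤ), br (HM i m) (HM i' n) = 0)
    (hPM : ∀ (i i' : ι) (m n : ℤ), br (HP i m) (HM i' n) =
      if m + n = 0 then B (Hup i) (Hup i') • one else 0)
    (hPE : ∀ (i : ι) (j : ιE) (m n : ℤ), br (HP i m) (E j n) = α j (Hup i) • E j (m + n))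
    (hME : ∀ (i : ι) (j : ιE) (m n : ℤ), br (HM i m) (E j n) = 0)
    (hEE : ∀ (j j' : ιE) (m n : ℤ), br (E j m) (E j' n) = 0)
    (hone : ∀ x : P, br x one = 0)
    (HMbar : ιE → ℤ → P)
    (hHMbar : ∀ (j : ιE) (p : ℤ), HMbar j p = ∑ k : ι, α j (bH k) • HM k p)
    (hsummable : ∀ (j : ιE) (n : ℤ),
      Summable (fun p : ℤ => ((p : ℂ) • (E j (n - p) * HMbar j p) : P)))
    (hbrsum : ∀ (x : P) (f : ℤ → P), Summable f →
      Summable (fun p => br x (f p)) ∧ br x (∑' p : ℤ, f p) = ∑' p : ℤ, br x (f p))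
    (Ehat : ιE → ℤ → P)
    (hEhat : ∀ (j : ιE) (n : ℤ), Ehat j n =
      (∑' p : ℤ, (p : ℂ) • (E j (n - p) * HMbar j p)) - (n : ℂ) • E j n) :
    (∀ (i : ι) (j : ιE) (m n : ℤ), br (HP i m) (Ehat j n) =
      α j (Hup i) • Ehat j (m + n) -
        α j (Hup i) • ((m : ℂ) • (E j (m + n) * (one - 1)))) ∧
    (∀ (i : ι) (j : ιE) (m n : ℤ), br (HM i m) (Ehat j n) = 0) ∧
    (∀ (j' j : ιE) (m n : ℤ), br (E j' m) (Ehat j n) = 0) ∧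
    (∀ x : P, br x (one - 1) = 0) := by
  have hbr : ∀ x : P, ∀ f : ℤ → P, Summable f → br x (∑' p, f p) = ∑' p, br x (f p) :=
    fun x f hf => (hbrsum x f hf).2
  have hPMbar : ∀ (i : ι) (j : ιE) (m p : ℤ),
      br (HP i m) (HMbar j p) = if m + p = 0 then α j (Hup i) • one else 0 := by
    intro i j m p
    simp only [hHMbar, map_sum, map_smul, hPM, smul_ite, smul_zero, smul_smul]
    split_ifs
    · simp_rw [← Finset.sum_smul, hBsymm (Hup i)]
      rw [bH.sum_apply_mul_pairing_of_dual B Hup hdual]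
    · simp
  obtain rfl : Ehat = fun j => hatMode (E j) (HMbar j) := funext fun j => funext (hEhat j)
  refine ⟨fun i j m n => ?_, fun i j m n => ?_, fun j' j m n => ?_, fun x => ?_⟩
  · exact br_hatMode_of_shift hleib (hbr _) (hPE i j m) (hPMbar i j m)
      (hsummable j n) (hsummable j (m + n))
  · refine br_hatMode_eq_zero hleib (hbr _) (hME i j m) (fun p => ?_) (hsummable j n)
    simp [hHMbar, hMM]
  · refine br_hatMode_eq_zero hleib (hbr _) (hEE j' j m) (fun p => ?_) (hsummable j n)
    simp [hHMbar, hskew (E j' m), hME]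
  · rw [map_sub, hone, br_one_right_of_leibniz br hleib, sub_zero]

/-- The consistency of the exponential Toda relations (Lemma `lem: Toda exp`): in the
(completed) Poisson algebra generated by the Heisenberg-type Lie algebra `ℋ` with basis
`H^{i(±)}_n` (`1 ≤ i ≤ ℓ`, `n ∈ ℤ`), `E^{j(+)}_n` (`0 ≤ j ≤ ℓ`, `n ∈ ℤ`) and central `𝟙`,
with non-trivial brackets
`{H^{i(+)}_m, H^{i'(−)}_n} = δ_{m+n,0} ⟨H^i, H^{i'}⟩ 𝟙` and
`{H^{i(+)}_m, E^{j(+)}_n} = α_j(H^i) E^{j(+)}_{m+n}`,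
the elements `Ê^{j(+)}_n = Σ_{p∈ℤ} p E^{j(+)}_{n−p} H^{(−)}_{j,p} − n E^{j(+)}_n`
(where `H^{(−)}_{j,p} = Σ_k α_j(H_k) H^{k(−)}_p`) together with `𝟙 − 1` generate a Poisson
ideal; concretely:
`{H^{i(+)}_m, Ê^{j(+)}_n} = α_j(H^i) Ê^{j(+)}_{m+n} − α_j(H^i) m E^{j(+)}_{m+n}(𝟙 − 1)`,
each `Ê^{j(+)}_n` Poisson-commutes with all the `H^{i(−)}_m` and `E^{i'(+)}_m`, and `𝟙 − 1`
is Poisson-central.  The completed infinite sums are encoded via `tsum` in a Hausdorff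
topological ring, with the bracket commuting with summation. -/
theorem stmt_18 {H : Type*} [AddCommGroup H] [Module ℂ H]
    {ι ιE : Type*} [Fintype ι]
    (B : H →ₗ[ℂ] H →ₗ[ℂ] ℂ) (hBsymm : ∀ x y, B x y = B y x)
    (hBnd : ∀ x, (∀ y, B x y = 0) → x = 0)
    (bH : Module.Basis ι ℂ H) (Hup : ι → H) [DecidableEq ι]
    (hdual : ∀ a b : ι, B (Hup a) (bH b) = if a = b then 1 else 0)
    (α : ιE → (H →ₗ[ℂ] ℂ))
    {P : Type*} [CommRing P] [Algebra ℂ P]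
    [TopologicalSpace P] [T2Space P] [IsTopologicalRing P] [ContinuousConstSMul ℂ P]
    (br : P →ₗ[ℂ] P →ₗ[ℂ] P)
    (hskew : ∀ x y : P, br x y = - br y x)
    (hleib : ∀ x y z : P, br x (y * z) = br x y * z + y * br x z)
    (HP HM : ι → ℤ → P) (E : ιE → ℤ → P) (one : P)
    (hPP : ∀ (i i' : ι) (m n : ℤ), br (HP i m) (HP i' n) = 0)
    (hMM : ∀ (i i' : ι) (m n : ℤ), br (HM i m) (HM i' n) = 0)
    (hPM : ∀ (i i' : ι) (m n : ℤ), br (HP i m) (HM i' n) =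
      if m + n = 0 then B (Hup i) (Hup i') • one else 0)
    (hPE : ∀ (i : ι) (j : ιE) (m n : ℤ), br (HP i m) (E j n) = α j (Hup i) • E j (m + n))
    (hME : ∀ (i : ι) (j : ιE) (m n : ℤ), br (HM i m) (E j n) = 0)
    (hEE : ∀ (j j' : ιE) (m n : ℤ), br (E j m) (E j' n) = 0)
    (hone : ∀ x : P, br x one = 0)
    (HMbar : ιE → ℤ → P)
    (hHMbar : ∀ (j : ιE) (p : ℤ), HMbar j p = ∑ k : ι, α j (bH k) • HM k p)
    (hsummable : ∀ (j : ιE) (n : ℤ),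
      Summable (fun p : ℤ => ((p : ℂ) • (E j (n - p) * HMbar j p) : P)))
    (hbrsum : ∀ (x : P) (f : ℤ → P), Summable f →
      Summable (fun p => br x (f p)) ∧ br x (∑' p : ℤ, f p) = ∑' p : ℤ, br x (f p))
    (Ehat : ιE → ℤ → P)
    (hEhat : ∀ (j : ιE) (n : ℤ), Ehat j n =
      (∑' p : ℤ, (p : ℂ) • (E j (n - p) * HMbar j p)) - (n : ℂ) • E j n) :
    (∀ (i : ι) (j : ιE) (m n : ℤ), br (HP i m) (Ehat j n) =
      α j (Hup i) • Ehat j (m + n) -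
        α j (Hup i) • ((m : ℂ) • (E j (m + n) * (one - 1)))) ∧
    (∀ (i : ι) (j : ιE) (m n : ℤ), br (HM i m) (Ehat j n) = 0) ∧
    (∀ (j' j : ιE) (m n : ℤ), br (E j' m) (Ehat j n) = 0) ∧
    (∀ x : P, br x (one - 1) = 0) :=
  stmt_18_general B hBsymm bH Hup hdual α br hskew hleib HP HM E one hMM hPM hPE hME hEE hone HMbar
    hHMbar hsummable hbrsum Ehat hEhat
end
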